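/- arXiv:1610.04639 — 3 statements merged into one kernel-verified Lean document; each statement's English description precedes it below -/
import Mathlib

section
/- Let Π be an orthogonal projection on L_2(E, μ) with range L, and g : E → [0,1] a bounded measurable function such that 1 + (g−1)Π is invertible. Then the subspace √g L = {√g φ : φ ∈ L} is closed in L_2(E, μ), and the operator √g Π (1 + (g−1)Π)^{-1} √g is the orthogonal projection onto √g L. -/
/-!
Only algebra is involved. With `D = 1 + (g - 1)Π`, idempotence of `Π` gives `DΠ = gΠ`, hence
`D⁻¹ g Π = Π`, and self-adjointness of `Π` and `√g` gives `D*Π = ΠD`, hence `Π D⁻¹ = (D*)⁻¹ Π`.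
The first identity shows that `Q = √g Π D⁻¹ √g` fixes `√g Π`, so `Q² = Q` and `ran Q = √g L`;
the second shows `Q* = Q`. Being the range of a continuous idempotent, `√g L` is closed.
-/

open ContinuousLinearMap Filter MeasureTheory
open scoped NNReal ENNReal Topology

noncomputable section

variable {H : Type*} [NormedAddCommGroup H] [InnerProductSpace ℂ H] [CompleteSpace H]
variable {ι : Type*}

/-- `T` is Hilbert–Schmidt w.r.t. the Hilbert basis `e`. -/
def IsHS (e : HilbertBasis ι ℂ H) (T : H →L[ℂ] H) : Prop :=
  Summable fun i => ‖T (e i)‖ ^ 2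

/-- Hilbert–Schmidt norm of `T` w.r.t. the Hilbert basis `e`. -/
noncomputable def hsNorm (e : HilbertBasis ι ℂ H) (T : H →L[ℂ] H) : ℝ :=
  Real.sqrt (∑' i, ‖T (e i)‖ ^ 2)

/-- Trace of `T` w.r.t. the Hilbert basis `e`. -/
noncomputable def opTrace (e : HilbertBasis ι ℂ H) (T : H →L[ℂ] H) : ℂ :=
  ∑' i, (inner ℂ (e i : H) (T (e i)) : ℂ)

/-- `T` is trace class: it is a product of two Hilbert–Schmidt operators. -/
def IsTraceClass (e : HilbertBasis ι ℂ H) (T : H →L[ℂ] H) : Prop :=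
  ∃ A B : H →L[ℂ] H, IsHS e A ∧ IsHS e B ∧ T = adjoint A ∘L B

/-- Trace norm `tr √(T* T)` w.r.t. the Hilbert basis `e`. -/
noncomputable def traceNorm (e : HilbertBasis ι ℂ H) (T : H →L[ℂ] H) : ℝ :=
  ∑' i, ((inner ℂ (e i : H) ((CFC.sqrt (adjoint T * T)) (e i)) : ℂ)).re

/-- The orthogonal projection onto `K`, as an operator `H →L[ℂ] H`. -/
noncomputable def projCLM (K : Submodule ℂ H) [K.HasOrthogonalProjection] : H →L[ℂ] H :=
  K.subtypeL ∘L K.orthogonalProjectionOnto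

open scoped Ring

section Ring

variable {R : Type*} [Ring R] {p a : R}

theorem IsIdempotentElem.one_add_sub_one_mul_mul (hp : IsIdempotentElem p) (b : R) :
    (1 + (b - 1) * p) * p = b * p := by
  have : (1 + (b - 1) * p) * p = p + (b - 1) * (p * p) := by noncomm_ring
  rw [this, hp.eq]; noncomm_ring

theorem IsIdempotentElem.ringInverse_one_add_sub_one_mul_mul (hp : IsIdempotentElem p) {b : R}
    (hu : IsUnit (1 + (b - 1) * p)) : (1 + (b - 1) * p)⁻¹ʳ * (b * p) = p := by
  rw [← hp.one_add_sub_one_mul_mul b, ← mul_assoc, Ring.inverse_mul_cancel _ hu, one_mul]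

theorem mul_ringInverse_eq_ringInverse_mul {x y : R} (hx : IsUnit x) (hy : IsUnit y)
    (h : x * p = p * y) : p * y⁻¹ʳ = x⁻¹ʳ * p := by
  calc p * y⁻¹ʳ = x⁻¹ʳ * (x * p) * y⁻¹ʳ := by
        rw [← mul_assoc, Ring.inverse_mul_cancel _ hx, one_mul]
    _ = x⁻¹ʳ * p := by rw [h, mul_assoc, mul_assoc, Ring.mul_inverse_cancel _ hy, mul_one]

theorem IsIdempotentElem.mul_mul_ringInverse_mul_mul_mul (hp : IsIdempotentElem p)
    (hu : IsUnit (1 + (a * a - 1) * p)) :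
    a * p * (1 + (a * a - 1) * p)⁻¹ʳ * a * (a * p) = a * p := by
  calc a * p * (1 + (a * a - 1) * p)⁻¹ʳ * a * (a * p)
      = a * p * ((1 + (a * a - 1) * p)⁻¹ʳ * (a * a * p)) := by noncomm_ring
    _ = a * p := by rw [hp.ringInverse_one_add_sub_one_mul_mul hu, mul_assoc, hp.eq]

end Ring

section StarRing

variable {R : Type*} [Ring R] [StarRing R] {p a : R}

theorem IsSelfAdjoint.star_one_add_sub_one_mul_mul (hp : IsSelfAdjoint p) {b : R}
    (hb : IsSelfAdjoint b) : star (1 + (b - 1) * p) * p = p * (1 + (b - 1) * p) := by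
  simp only [star_add, star_one, star_mul, star_sub, hp.star_eq, hb.star_eq]
  noncomm_ring

theorem IsStarProjection.mul_mul_ringInverse_mul (hp : IsStarProjection p) (ha : IsSelfAdjoint a)
    (hu : IsUnit (1 + (a * a - 1) * p)) :
    IsStarProjection (a * p * (1 + (a * a - 1) * p)⁻¹ʳ * a) where
  isIdempotentElem := by
    unfold IsIdempotentElem
    calc a * p * (1 + (a * a - 1) * p)⁻¹ʳ * a * (a * p * (1 + (a * a - 1) * p)⁻¹ʳ * a)
        = a * p * (1 + (a * a - 1) * p)⁻¹ʳ * a * (a * p) * ((1 + (a * a - 1) * p)⁻¹ʳ * a) := by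
          noncomm_ring
      _ = _ := by rw [hp.isIdempotentElem.mul_mul_ringInverse_mul_mul_mul hu]; noncomm_ring
  isSelfAdjoint := by
    have hcomm := mul_ringInverse_eq_ringInverse_mul hu.star hu
      (hp.isSelfAdjoint.star_one_add_sub_one_mul_mul (b := a * a) (by
        simpa only [ha.star_eq] using IsSelfAdjoint.star_mul_self a))
    rw [isSelfAdjoint_iff]
    simp only [star_mul, ha.star_eq, hp.isSelfAdjoint.star_eq, ← Ring.inverse_star]
    rw [mul_assoc a p, hcomm]
    noncomm_ring

end StarRing

section Range

variable {R M : Type*} [Semiring R] [AddCommMonoid M] [Module R M] [TopologicalSpace M]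

theorem ContinuousLinearMap.range_eq_map_range_of_mul_mul {q a p c : M →L[R] M}
    (hq : q = a * p * c) (hfix : q * (a * p) = a * p) :
    LinearMap.range (q : M →ₗ[R] M) = (LinearMap.range (p : M →ₗ[R] M)).map (a : M →ₗ[R] M) := by
  ext x
  constructor
  · rintro ⟨y, rfl⟩
    exact ⟨p (c y), ⟨c y, rfl⟩, by rw [hq]; rfl⟩
  · rintro ⟨_, ⟨z, rfl⟩, rfl⟩
    exact ⟨a (p z), congr($hfix z)⟩

end Range

theorem MeasureTheory.L2.isSelfAdjoint_of_ae_eq_ofReal_mul {𝕜 E : Type*} [RCLike 𝕜]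
    [MeasurableSpace E] {μ : Measure E} {f : E → ℝ} {T : Lp 𝕜 2 μ →L[𝕜] Lp 𝕜 2 μ}
    (hT : ∀ φ : Lp 𝕜 2 μ, (T φ : E → 𝕜) =ᵐ[μ] fun x => (f x : 𝕜) * φ x) : IsSelfAdjoint T := by
  rw [ContinuousLinearMap.isSelfAdjoint_iff_isSymmetric]
  intro φ ψ
  simp only [coe_coe, L2.inner_def]
  refine integral_congr_ae ?_
  filter_upwards [hT φ, hT ψ] with x hφ hψ
  rw [hφ, hψ, RCLike.inner_apply, RCLike.inner_apply, map_mul, RCLike.conj_ofReal]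
  ring

theorem stmt9_general {E : Type*} [MeasurableSpace E] {μ : Measure E}
    (P : Lp ℂ 2 μ →L[ℂ] Lp ℂ 2 μ) (hproj : P ∘L P = P) (hsa : IsSelfAdjoint P)
    (g : E → ℝ)
    (Mg : Lp ℂ 2 μ →L[ℂ] Lp ℂ 2 μ)
    (hMg : ∀ φ : Lp ℂ 2 μ, (Mg φ : E → ℂ) =ᵐ[μ] fun x => (Real.sqrt (g x) : ℂ) * φ x)
    (hU : IsUnit (1 + (Mg ∘L Mg - 1) ∘L P))
    (Pg : Lp ℂ 2 μ →L[ℂ] Lp ℂ 2 μ)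
    (hPg : Pg = Mg ∘L P ∘L Ring.inverse (1 + (Mg ∘L Mg - 1) ∘L P) ∘L Mg) :
    IsClosed ((⇑Mg) '' ((LinearMap.range (P : Lp ℂ 2 μ →ₗ[ℂ] Lp ℂ 2 μ) : Submodule ℂ (Lp ℂ 2 μ)) : Set (Lp ℂ 2 μ))) ∧
      Pg ∘L Pg = Pg ∧ IsSelfAdjoint Pg ∧
      LinearMap.range (Pg : Lp ℂ 2 μ →ₗ[ℂ] Lp ℂ 2 μ) = Submodule.map (Mg : Lp ℂ 2 μ →ₗ[ℂ] Lp ℂ 2 μ) (LinearMap.range (P : Lp ℂ 2 μ →ₗ[ℂ] Lp ℂ 2 μ)) := by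
  have hMg_sa : IsSelfAdjoint Mg := L2.isSelfAdjoint_of_ae_eq_ofReal_mul hMg
  have hPg_mul : Pg = Mg * P * (1 + (Mg * Mg - 1) * P)⁻¹ʳ * Mg := by
    simp only [hPg, mul_def, comp_assoc]
  have hPg_proj : IsStarProjection Pg :=
    hPg_mul ▸ IsStarProjection.mul_mul_ringInverse_mul ⟨hproj, hsa⟩ hMg_sa hU
  have hrange : LinearMap.range (Pg : Lp ℂ 2 μ →ₗ[ℂ] Lp ℂ 2 μ) =
      (LinearMap.range (P : Lp ℂ 2 μ →ₗ[ℂ] Lp ℂ 2 μ)).map (Mg : Lp ℂ 2 μ →ₗ[ℂ] Lp ℂ 2 μ) :=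
    ContinuousLinearMap.range_eq_map_range_of_mul_mul (by rw [hPg_mul, mul_assoc])
      (hPg_mul ▸ IsIdempotentElem.mul_mul_ringInverse_mul_mul_mul hproj hU)
  refine ⟨?_, hPg_proj.isIdempotentElem, hPg_proj.isSelfAdjoint, hrange⟩
  have hclosed := hPg_proj.isIdempotentElem.isClosed_range
  rwa [hrange, Submodule.map_coe] at hclosed

/-- if `1 + (g-1) P` is invertible then `sqrt g · L` is closed and
`sqrt g P (1 + (g-1) P)⁻¹ sqrt g` is the orthogonal projection (self-adjoint idempotent)
onto it. Here `Mg` is multiplication by `sqrt g`, so multiplication by `g` is `Mg Mg`. -/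
theorem stmt9 {E : Type*} [MeasurableSpace E] {μ : Measure E} [SigmaFinite μ]
    (P : Lp ℂ 2 μ →L[ℂ] Lp ℂ 2 μ) (hproj : P ∘L P = P) (hsa : IsSelfAdjoint P)
    (g : E → ℝ) (hgm : Measurable g) (hg0 : ∀ x, 0 ≤ g x) (hg1 : ∀ x, g x ≤ 1)
    (Mg : Lp ℂ 2 μ →L[ℂ] Lp ℂ 2 μ)
    (hMg : ∀ φ : Lp ℂ 2 μ, (Mg φ : E → ℂ) =ᵐ[μ] fun x => (Real.sqrt (g x) : ℂ) * φ x)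
    (hU : IsUnit (1 + (Mg ∘L Mg - 1) ∘L P))
    (Pg : Lp ℂ 2 μ →L[ℂ] Lp ℂ 2 μ)
    (hPg : Pg = Mg ∘L P ∘L Ring.inverse (1 + (Mg ∘L Mg - 1) ∘L P) ∘L Mg) :
    IsClosed ((⇑Mg) '' ((LinearMap.range (P : Lp ℂ 2 μ →ₗ[ℂ] Lp ℂ 2 μ) : Submodule ℂ (Lp ℂ 2 μ)) : Set (Lp ℂ 2 μ))) ∧
      Pg ∘L Pg = Pg ∧ IsSelfAdjoint Pg ∧
      LinearMap.range (Pg : Lp ℂ 2 μ →ₗ[ℂ] Lp ℂ 2 μ) = Submodule.map (Mg : Lp ℂ 2 μ →ₗ[ℂ] Lp ℂ 2 μ) (LinearMap.range (P : Lp ℂ 2 μ →ₗ[ℂ] Lp ℂ 2 μ)) :=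
  stmt9_general P hproj hsa g Mg hMg hU Pg hPg
end
end

section
/- Let V be a finite-dimensional subspace of a space of measurable functions on E with V ∩ L_2(E, μ) = 0, in the sense that for every nonzero ψ ∈ V and every ε > 0 and bounded B, there is a bounded B_ε ⊇ B with ‖χ_B ψ‖ / ‖χ_{B_ε} ψ‖ < ε. Let P^{(n)} be the orthogonal projections in L_2(E,μ) onto √(g_n) V, where g_n : E → (0,1] satisfy √(g_n)V ⊂ L_2(E,μ), inf over n and over E_0 ∪ B of g_n is positive, and g_n → 1 uniformly on E_0 ∪ B for every bounded B. Then P^{(n)} → 0 in the strong operator topology. -/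
open ContinuousLinearMap Filter MeasureTheory
open scoped NNReal ENNReal Topology

noncomputable section

variable {H : Type*} [NormedAddCommGroup H] [InnerProductSpace ℂ H] [CompleteSpace H]
variable {ι : Type*}

/-!
For a bounded set `B` the seminorms `ψ ↦ ‖1_B ψ‖₂` on the finite-dimensional space `V` form a
monotone family directed by inclusion, and the hypothesis on `V` says that each `ψ` is eventually
negligible on `B` compared with a larger bounded set. Compactness of the unit sphere of `V` modulo
the common null space of these seminorms makes this uniform: for every `ε` there is a bounded
`B' ⊇ B` with `‖1_B ψ‖ ≤ ε ‖1_{B'} ψ‖` for all `ψ ∈ V`. Once `g_n ≥ 1/4` on `B'`, every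
`w = √g_n ψ` in the range of `P⁽ⁿ⁾` therefore satisfies `‖1_B w‖ ≤ 2ε ‖w‖`. Since
`‖P⁽ⁿ⁾ φ‖ = sup {|⟪φ, w⟫| : w ∈ range P⁽ⁿ⁾, ‖w‖ = 1}`, splitting `φ = 1_{Bᶜ} φ + 1_B φ` gives
`‖P⁽ⁿ⁾ φ‖ ≤ ‖1_{Bᶜ} φ‖ + 2ε ‖φ‖`, and the first term is small once `B` is a large compact set.
-/

open Set
open scoped InnerProductSpace

namespace Seminorm

variable {𝕜 F ι : Type*} [RCLike 𝕜]

section NullSpace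

variable [AddCommGroup F] [Module 𝕜 F]

def nullSpace (p : Seminorm 𝕜 F) : Submodule 𝕜 F where
  carrier := {x | p x = 0}
  add_mem' {x y} hx hy :=
    le_antisymm ((map_add_le_add p x y).trans (by simp_all)) (apply_nonneg p _)
  zero_mem' := map_zero p
  smul_mem' c x hx := by simp_all [map_smul_eq_mul]

@[simp] lemma mem_nullSpace {p : Seminorm 𝕜 F} {x : F} : x ∈ p.nullSpace ↔ p x = 0 := Iff.rfl

lemma nullSpace_anti {p q : Seminorm 𝕜 F} (h : p ≤ q) : q.nullSpace ≤ p.nullSpace :=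
  fun x hx => le_antisymm ((h x).trans_eq hx) (apply_nonneg p x)

lemma apply_add_of_mem_nullSpace (p : Seminorm 𝕜 F) (x : F) {y : F} (hy : y ∈ p.nullSpace) :
    p (x + y) = p x :=
  le_antisymm ((map_add_le_add p x y).trans_eq (by rw [mem_nullSpace.1 hy, add_zero]))
    (by simpa [mem_nullSpace.1 hy] using map_sub_le_add p (x + y) y)

lemma exists_nullSpace_le [FiniteDimensional 𝕜 F] [Preorder ι] [IsDirectedOrder ι] [Nonempty ι]
    {p : ι → Seminorm 𝕜 F} (hp : Monotone p) : ∃ i₀, ∀ j, (p i₀).nullSpace ≤ (p j).nullSpace := by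
  let i₀ := Function.argmin fun i => Module.finrank 𝕜 (p i).nullSpace
  refine ⟨i₀, fun j => ?_⟩
  obtain ⟨k, hi₀k, hjk⟩ := directed_of (· ≤ ·) i₀ j
  have hk : (p k).nullSpace = (p i₀).nullSpace :=
    Submodule.eq_of_le_of_finrank_le (nullSpace_anti (hp hi₀k))
      (Function.argmin_le (fun i => Module.finrank 𝕜 (p i).nullSpace) k)
  exact hk ▸ nullSpace_anti (hp hjk)

end NullSpace

lemma continuous_of_finiteDimensional [NormedAddCommGroup F] [NormedSpace 𝕜 F]
    [FiniteDimensional 𝕜 F] (p : Seminorm 𝕜 F) : Continuous p := by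
  let _ : NormedSpace ℝ F := NormedSpace.restrictScalars ℝ 𝕜 F
  have : FiniteDimensional ℝ F := .trans ℝ 𝕜 F
  rw [← continuousOn_univ, ← interior_univ]
  exact p.convexOn.continuousOn_interior

variable [Preorder ι] [IsDirectedOrder ι]

theorem exists_forall_le_mul_of_forall_exists_of_innerProductSpace [NormedAddCommGroup F]
    [InnerProductSpace 𝕜 F] [FiniteDimensional 𝕜 F] {p : ι → Seminorm 𝕜 F} (hp : Monotone p)
    (h : ∀ x i, ∀ ε > 0, ∃ j ≥ i, p i x ≤ ε * p j x) {ε : ℝ} (hε : 0 < ε) (i : ι) :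
    ∃ j ≥ i, ∀ x, p i x ≤ ε * p j x := by
  classical
  have : Nonempty ι := ⟨i⟩
  obtain ⟨i₀, hi₀⟩ := exists_nullSpace_le hp
  obtain ⟨i₁, hii₁, hi₀i₁⟩ := directed_of (· ≤ ·) i i₀
  set K := (p i₀).nullSpace
  set S := Metric.sphere (0 : F) 1 ∩ Kᗮ
  have hpos : ∀ x ∈ S, 0 < p i₁ x := by
    intro x ⟨hx1, hxK⟩
    refine (apply_nonneg _ _).lt_of_ne' fun hx0 => ?_
    have : x ∈ K ⊓ Kᗮ := ⟨nullSpace_anti (hp hi₀i₁) hx0, hxK⟩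
    rw [Submodule.inf_orthogonal_eq_bot, Submodule.mem_bot] at this
    simp [this] at hx1
  -- `p i₁` is positive on `S`, which turns the pointwise bounds into strict, hence open, ones.
  choose! j hij hj using fun x (hx : x ∈ S) => h x i₁ (ε / 2) (half_pos hε)
  let O : F → Set F := fun x => {y | p i y < ε * p (j x) y}
  have hxO : ∀ x ∈ S, x ∈ O x := fun x hx => calc
    p i x ≤ p i₁ x := hp hii₁ x
    _ ≤ ε / 2 * p (j x) x := hj x hx
    _ < ε * p (j x) x :=
      mul_lt_mul_of_pos_right (half_lt_self hε) ((hpos x hx).trans_le (hp (hij x hx) x))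
  have hOopen : ∀ x, IsOpen (O x) := fun x =>
    isOpen_lt (p i).continuous_of_finiteDimensional
      (continuous_const.mul (p (j x)).continuous_of_finiteDimensional)
  have : ProperSpace F := FiniteDimensional.proper_rclike 𝕜 F
  have hScompact : IsCompact S :=
    (isCompact_sphere 0 1).inter_right (Submodule.closed_of_finiteDimensional _)
  obtain ⟨t, -, hcover⟩ :=
    hScompact.elim_nhds_subcover O fun x hx => (hOopen x).mem_nhds (hxO x hx)
  obtain ⟨k, hk⟩ := (insert i (t.image j)).exists_le
  refine ⟨k, hk i (Finset.mem_insert_self _ _), fun x => ?_⟩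
  obtain ⟨y, hyK, z, hzK, rfl⟩ := K.exists_add_mem_mem_orthogonal x
  rw [add_comm y, apply_add_of_mem_nullSpace _ _ (hi₀ i hyK),
    apply_add_of_mem_nullSpace _ _ (hi₀ k hyK)]
  rcases eq_or_ne z 0 with rfl | hz
  · simp
  set u := (‖z‖⁻¹ : 𝕜) • z
  have hu : u ∈ S := ⟨by simp [u, norm_smul, hz], K.orthogonal.smul_mem _ hzK⟩
  obtain ⟨x₀, hx₀t, hux₀⟩ := mem_iUnion₂.1 (hcover hu)
  have : p i u ≤ ε * p k u := calc
    p i u ≤ ε * p (j x₀) u := (hux₀ : p i u < _).le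
    _ ≤ ε * p k u := by
      gcongr
      exact hp (hk _ (Finset.mem_insert_of_mem (Finset.mem_image_of_mem j hx₀t))) u
  have hscale : ∀ q : Seminorm 𝕜 F, q u = ‖z‖⁻¹ * q z := fun q => by simp [u, map_smul_eq_mul]
  rw [hscale, hscale, mul_left_comm] at this
  exact le_of_mul_le_mul_left this (by positivity)

theorem exists_forall_le_mul_of_forall_exists [AddCommGroup F] [Module 𝕜 F]
    [FiniteDimensional 𝕜 F] {p : ι → Seminorm 𝕜 F} (hp : Monotone p)
    (h : ∀ x i, ∀ ε > 0, ∃ j ≥ i, p i x ≤ ε * p j x) {ε : ℝ} (hε : 0 < ε) (i : ι) :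
    ∃ j ≥ i, ∀ x, p i x ≤ ε * p j x := by
  let e : F ≃ₗ[𝕜] EuclideanSpace 𝕜 (Fin (Module.finrank 𝕜 F)) := .ofFinrankEq _ _ (by simp)
  obtain ⟨j, hij, hj⟩ := exists_forall_le_mul_of_forall_exists_of_innerProductSpace
    (p := fun i => (p i).comp e.symm.toLinearMap) (fun i j hij => comp_mono _ (hp hij))
    (fun x i ε hε => by simpa using h (e.symm x) i ε hε) hε i
  exact ⟨j, hij, fun x => by simpa using hj (e x)⟩

end Seminorm

lemma ENNReal.le_ofReal_mul_iff_toReal_le_mul {a b : ℝ≥0∞} {c : ℝ} (ha : a ≠ ∞) (hb : b ≠ ∞)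
    (hc : 0 ≤ c) : a ≤ ENNReal.ofReal c * b ↔ a.toReal ≤ c * b.toReal := by
  conv_lhs => rw [← ENNReal.ofReal_toReal hb, ← ENNReal.ofReal_mul hc]
  exact ENNReal.le_ofReal_iff_toReal_le ha (by positivity)

theorem Submodule.norm_starProjection_le_of_forall_norm_inner_le {𝕜 H : Type*} [RCLike 𝕜]
    [NormedAddCommGroup H] [InnerProductSpace 𝕜 H] (K : Submodule 𝕜 H) [K.HasOrthogonalProjection]
    (x : H) {C : ℝ} (hC : 0 ≤ C) (h : ∀ w ∈ K, ‖⟪x, w⟫_𝕜‖ ≤ C * ‖w‖) :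
    ‖K.starProjection x‖ ≤ C := by
  set y := K.starProjection x
  have hy : y ∈ K := K.starProjection_apply_mem x
  have hxy : ⟪x, y⟫_𝕜 = ⟪y, y⟫_𝕜 := by
    rw [← sub_eq_zero, ← inner_sub_left]
    exact K.starProjection_inner_eq_zero x y hy
  have : ‖y‖ * ‖y‖ ≤ C * ‖y‖ := by
    simpa [hxy, inner_self_eq_norm_sq_to_K, sq] using h y hy
  rcases (norm_nonneg y).eq_or_lt with h0 | h0
  · exact h0 ▸ hC
  · exact le_of_mul_le_mul_right this h0

namespace MeasureTheory

variable {α 𝕜 E F : Type*} [MeasurableSpace α] {μ : Measure α} [RCLike 𝕜]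

theorem tendsto_eLpNorm_indicator_compl [NormedAddCommGroup E] {f : α → E} {p : ℝ≥0∞}
    (hf : MemLp f p μ) (hp0 : p ≠ 0) (hp : p ≠ ∞) {s : ℕ → Set α} (hs : ∀ n, MeasurableSet (s n))
    (hmono : Monotone s) (hcover : ⋃ n, s n = univ) :
    Tendsto (fun n => eLpNorm ((s n)ᶜ.indicator f) p μ) atTop (𝓝 0) := by
  set ν := μ.withDensity fun x => ‖f x‖ₑ ^ p.toReal
  have hν : ∀ t, MeasurableSet t → eLpNorm (t.indicator f) p μ = ν t ^ (1 / p.toReal) := by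
    intro t ht
    rw [eLpNorm_indicator_eq_eLpNorm_restrict ht, eLpNorm_eq_lintegral_rpow_enorm_toReal hp0 hp,
      withDensity_apply _ ht]
  have hν_univ : ν univ ≠ ∞ := by
    rw [withDensity_apply _ .univ, Measure.restrict_univ]
    exact (lintegral_rpow_enorm_lt_top_of_eLpNorm_lt_top hp0 hp hf.eLpNorm_lt_top).ne
  have hν_tail : Tendsto (fun n => ν (s n)ᶜ) atTop (𝓝 0) := by
    have := tendsto_measure_iInter_atTop (μ := ν) (fun n => (hs n).compl.nullMeasurableSet)
      (fun m n h => compl_subset_compl.2 (hmono h))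
      ⟨0, ne_top_of_le_ne_top hν_univ (measure_mono (subset_univ _))⟩
    rwa [← compl_iUnion, hcover, compl_univ, measure_empty] at this
  have := (ENNReal.continuous_rpow_const (y := 1 / p.toReal)).tendsto 0 |>.comp hν_tail
  rw [ENNReal.zero_rpow_of_pos (by simp [ENNReal.toReal_pos hp0 hp])] at this
  exact this.congr fun n => (hν _ (hs n).compl).symm

section L2

variable [NormedAddCommGroup E] [InnerProductSpace 𝕜 E]

theorem L2.norm_inner_le_eLpNorm_indicator (f g : Lp E 2 μ) {s : Set α} (hs : MeasurableSet s) :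
    ‖⟪f, g⟫_𝕜‖ ≤
      (eLpNorm (sᶜ.indicator f) 2 μ).toReal * ‖g‖ + ‖f‖ * (eLpNorm (s.indicator g) 2 μ).toReal := by
  have hf : MemLp (sᶜ.indicator f) 2 μ := (Lp.memLp f).indicator hs.compl
  have hg : MemLp (s.indicator g) 2 μ := (Lp.memLp g).indicator hs
  have hsplit : ⟪f, g⟫_𝕜 = ⟪hf.toLp _, g⟫_𝕜 + ⟪f, hg.toLp _⟫_𝕜 := by
    simp only [L2.inner_def]
    rw [← integral_add (L2.integrable_inner _ _) (L2.integrable_inner _ _)]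
    refine integral_congr_ae ?_
    filter_upwards [hf.coeFn_toLp, hg.coeFn_toLp] with x hfx hgx
    rw [hfx, hgx]
    by_cases hx : x ∈ s <;> simp [hx]
  rw [hsplit, ← Lp.norm_toLp _ hf, ← Lp.norm_toLp _ hg]
  exact (norm_add_le _ _).trans (add_le_add (norm_inner_le_norm _ _) (norm_inner_le_norm _ _))

theorem L2.tendsto_starProjection_zero_of_eLpNorm_indicator_le [CompleteSpace E]
    {W : ℕ → Submodule 𝕜 (Lp E 2 μ)} [∀ n, (W n).HasOrthogonalProjection] {s : ℕ → Set α}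
    (hs : ∀ m, MeasurableSet (s m)) (hmono : Monotone s) (hcover : ⋃ m, s m = univ)
    (h : ∀ m, ∀ ε > 0, ∀ᶠ n in atTop, ∀ w ∈ W n,
      eLpNorm ((s m).indicator w) 2 μ ≤ ENNReal.ofReal ε * eLpNorm w 2 μ)
    (f : Lp E 2 μ) : Tendsto (fun n => (W n).starProjection f) atTop (𝓝 0) := by
  rw [NormedAddGroup.tendsto_nhds_zero]
  intro δ hδ
  obtain ⟨m, hm⟩ := ((tendsto_eLpNorm_indicator_compl (Lp.memLp f) two_ne_zero
    ENNReal.ofNat_ne_top hs hmono hcover).eventually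
    (gt_mem_nhds (ENNReal.ofReal_pos.2 (half_pos hδ)))).exists
  set ε := δ / (2 * (‖f‖ + 1))
  have hfε : ‖f‖ * ε ≤ δ / 2 := calc
    ‖f‖ * ε ≤ (‖f‖ + 1) * ε := by gcongr; linarith
    _ = δ / 2 := by simp only [ε]; field_simp
  filter_upwards [h m ε (by positivity)] with n hn
  calc ‖(W n).starProjection f‖ ≤ (eLpNorm ((s m)ᶜ.indicator f) 2 μ).toReal + ‖f‖ * ε := by
        refine (W n).norm_starProjection_le_of_forall_norm_inner_le f (by positivity) fun w hw => ?_
        have hw' := (ENNReal.le_ofReal_mul_iff_toReal_le_mul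
          ((Lp.memLp w).indicator (hs m)).eLpNorm_ne_top (Lp.eLpNorm_ne_top w) (by positivity)).1
          (hn w hw)
        rw [← Lp.norm_def] at hw'
        calc ‖⟪f, w⟫_𝕜‖ ≤ _ := L2.norm_inner_le_eLpNorm_indicator f w (hs m)
          _ ≤ (eLpNorm ((s m)ᶜ.indicator f) 2 μ).toReal * ‖w‖ + ‖f‖ * (ε * ‖w‖) := by gcongr
          _ = _ := by ring
    _ < δ / 2 + δ / 2 := add_lt_add_of_lt_of_le (ENNReal.toReal_lt_of_lt_ofReal hm) hfε
    _ = δ := add_halves δ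

end L2

section LocalSeminorm

variable [NormedAddCommGroup F] [NormedSpace 𝕜 F]

def indicatorLpSeminorm (μ : Measure α) (p : ℝ≥0∞) [Fact (1 ≤ p)]
    (V : Submodule 𝕜 (α → F)) (A : Set α) (hA : ∀ ψ ∈ V, MemLp (A.indicator ψ) p μ) :
    Seminorm 𝕜 V :=
  Seminorm.of (fun ψ : V => (eLpNorm (A.indicator (ψ : α → F)) p μ).toReal)
    (fun ψ φ => by
      rw [Submodule.coe_add, indicator_add', ← ENNReal.toReal_add (hA ψ ψ.2).eLpNorm_ne_top
        (hA φ φ.2).eLpNorm_ne_top]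
      exact ENNReal.toReal_mono
        (by finiteness [(hA ψ ψ.2).eLpNorm_ne_top, (hA φ φ.2).eLpNorm_ne_top])
        (eLpNorm_add_le (hA ψ ψ.2).1 (hA φ φ.2).1 Fact.out))
    (fun c ψ => by
      rw [Submodule.coe_smul, show A.indicator (c • (ψ : α → F)) = c • A.indicator ψ from
        indicator_const_smul A c _, eLpNorm_const_smul, ENNReal.toReal_mul, toReal_enorm])

lemma indicatorLpSeminorm_apply {p : ℝ≥0∞} [Fact (1 ≤ p)]
    {V : Submodule 𝕜 (α → F)} {A : Set α} (hA : ∀ ψ ∈ V, MemLp (A.indicator ψ) p μ) (ψ : V) :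
    indicatorLpSeminorm μ p V A hA ψ = (eLpNorm (A.indicator (ψ : α → F)) p μ).toReal := rfl

theorem exists_forall_eLpNorm_indicator_le_mul [TopologicalSpace α] {p : ℝ≥0∞} [Fact (1 ≤ p)]
    (V : Submodule 𝕜 (α → F)) [FiniteDimensional 𝕜 V]
    (hloc : ∀ A, MeasurableSet A → IsCompact (closure A) → ∀ ψ ∈ V, MemLp (A.indicator ψ) p μ)
    (hV : ∀ ψ ∈ V, ψ ≠ 0 → ∀ ε : ℝ, 0 < ε → ∀ B : Set α, IsCompact (closure B) →
      ∃ Bε : Set α, B ⊆ Bε ∧ MeasurableSet Bε ∧ IsCompact (closure Bε) ∧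
        eLpNorm (B.indicator ψ) p μ ≤ ENNReal.ofReal ε * eLpNorm (Bε.indicator ψ) p μ)
    {ε : ℝ} (hε : 0 < ε) {B : Set α} (hBm : MeasurableSet B) (hB : IsCompact (closure B)) :
    ∃ B', B ⊆ B' ∧ IsCompact (closure B') ∧
      ∀ ψ ∈ V, eLpNorm (B.indicator ψ) p μ ≤ ENNReal.ofReal ε * eLpNorm (B'.indicator ψ) p μ := by
  let ι := {A : Set α // MeasurableSet A ∧ IsCompact (closure A)}
  have : IsDirectedOrder ι := ⟨fun A A' => ⟨⟨A.1 ∪ A'.1, A.2.1.union A'.2.1,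
    by rw [closure_union]; exact A.2.2.union A'.2.2⟩, subset_union_left, subset_union_right⟩⟩
  let q : ι → Seminorm 𝕜 V := fun A => indicatorLpSeminorm μ p V A (hloc A A.2.1 A.2.2)
  have hfin : ∀ (A : ι) (ψ : V), eLpNorm ((A : Set α).indicator (ψ : α → F)) p μ ≠ ∞ :=
    fun A ψ => (hloc A A.2.1 A.2.2 ψ ψ.2).eLpNorm_ne_top
  have hq : ∀ {A A' : ι} {c : ℝ} (ψ : V), 0 ≤ c → (q A ψ ≤ c * q A' ψ ↔
      eLpNorm ((A : Set α).indicator (ψ : α → F)) p μ ≤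
        ENNReal.ofReal c * eLpNorm ((A' : Set α).indicator (ψ : α → F)) p μ) :=
    fun ψ hc => (ENNReal.le_ofReal_mul_iff_toReal_le_mul (hfin _ ψ) (hfin _ ψ) hc).symm
  have hmono : Monotone q := fun A A' hAA' ψ =>
    ENNReal.toReal_mono (hfin A' ψ) (eLpNorm_mono fun x => norm_indicator_le_of_subset hAA' _ x)
  have hpointwise : ∀ ψ A, ∀ ε > 0, ∃ A' ≥ A, q A ψ ≤ ε * q A' ψ := by
    intro ψ A ε hε
    by_cases hψ : (ψ : α → F) = 0
    · exact ⟨A, le_rfl, by simp [q, indicatorLpSeminorm_apply, hψ]⟩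
    obtain ⟨A', hAA', hA'm, hA'c, h⟩ := hV ψ ψ.2 hψ ε hε A A.2.2
    exact ⟨⟨A', hA'm, hA'c⟩, hAA', (hq ψ hε.le).2 h⟩
  obtain ⟨⟨B', hB'm, hB'c⟩, hBB', h⟩ :=
    Seminorm.exists_forall_le_mul_of_forall_exists hmono hpointwise hε ⟨B, hBm, hB⟩
  exact ⟨B', hBB', hB'c, fun ψ hψ =>
    (hq (A := ⟨B, hBm, hB⟩) (A' := ⟨B', hB'm, hB'c⟩) ⟨ψ, hψ⟩ hε.le).1 (h ⟨ψ, hψ⟩)⟩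

end LocalSeminorm

theorem MemLp.indicator_of_sqrt_mul {g : α → ℝ} {ψ : α → 𝕜} {p : ℝ≥0∞}
    (h : MemLp (fun x => (√(g x) : 𝕜) * ψ x) p μ) (hψ : AEStronglyMeasurable ψ μ) {A : Set α}
    (hA : MeasurableSet A) {c : ℝ} (hc : 0 < c) (hcg : ∀ x ∈ A, c ≤ g x) :
    MemLp (A.indicator ψ) p μ := by
  refine h.of_le_mul (c := (√c)⁻¹) (hψ.indicator hA) (ae_of_all _ fun x => ?_)
  by_cases hx : x ∈ A
  · have : √c ≤ √(g x) := Real.sqrt_le_sqrt (hcg x hx)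
    have hc' : 0 < √c := Real.sqrt_pos.2 hc
    rw [indicator_of_mem hx, norm_mul, RCLike.norm_ofReal, abs_of_nonneg (Real.sqrt_nonneg _),
      ← mul_assoc]
    exact le_mul_of_one_le_left (norm_nonneg _) ((one_le_inv_mul₀ hc').2 this)
  · simp [hx]; positivity

theorem eLpNorm_indicator_sqrt_mul_le {g : α → ℝ} {ψ : α → 𝕜} {p : ℝ≥0∞} {B B' : Set α}
    {ε : ℝ} (hg1 : ∀ x, g x ≤ 1) (hgB' : ∀ x ∈ B', 1 / 4 ≤ g x)
    (hdom : eLpNorm (B.indicator ψ) p μ ≤ ENNReal.ofReal ε * eLpNorm (B'.indicator ψ) p μ) :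
    eLpNorm (B.indicator fun x => (√(g x) : 𝕜) * ψ x) p μ ≤
      ENNReal.ofReal (2 * ε) * eLpNorm (fun x => (√(g x) : 𝕜) * ψ x) p μ := by
  set w := fun x => (√(g x) : 𝕜) * ψ x
  have hw : ∀ x, ‖w x‖ = √(g x) * ‖ψ x‖ := fun x => by
    simp [w, norm_mul, abs_of_nonneg (Real.sqrt_nonneg _)]
  have hB : ∀ x, ‖B.indicator w x‖ ≤ ‖B.indicator ψ x‖ := fun x => by
    by_cases hx : x ∈ B
    · simp only [indicator_of_mem hx, hw]
      exact mul_le_of_le_one_left (norm_nonneg _) (Real.sqrt_le_one.2 (hg1 x))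
    · simp [hx]
  have hB' : ∀ x, ‖B'.indicator ψ x‖ ≤ 2 * ‖B'.indicator w x‖ := fun x => by
    by_cases hx : x ∈ B'
    · have : 1 / 2 ≤ √(g x) := Real.le_sqrt_of_sq_le (by linarith [hgB' x hx])
      simp only [indicator_of_mem hx, hw]
      nlinarith [norm_nonneg (ψ x)]
    · simp [hx]
  calc eLpNorm (B.indicator w) p μ ≤ eLpNorm (B.indicator ψ) p μ := eLpNorm_mono hB
    _ ≤ ENNReal.ofReal ε * eLpNorm (B'.indicator ψ) p μ := hdom
    _ ≤ ENNReal.ofReal ε * (ENNReal.ofReal 2 * eLpNorm w p μ) := by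
      gcongr
      exact (eLpNorm_le_mul_eLpNorm_of_ae_le_mul (ae_of_all _ hB') p).trans
        (by gcongr; exact eLpNorm_indicator_le w)
    _ = ENNReal.ofReal (2 * ε) * eLpNorm w p μ := by
      rw [ENNReal.ofReal_mul zero_le_two]
      ring

end MeasureTheory

theorem stmt13_general {E : Type*} [TopologicalSpace E] [PolishSpace E] [LocallyCompactSpace E]
    [MeasurableSpace E] [BorelSpace E] {μ : Measure E}
    (E0 : Set E) (V : Submodule ℂ (E → ℂ)) [FiniteDimensional ℂ V]
    (hVmeas : ∀ ψ ∈ V, Measurable ψ)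
    (hVL2 : ∀ ψ ∈ V, ψ ≠ 0 → ∀ ε : ℝ, 0 < ε → ∀ B : Set E, IsCompact (closure B) →
      ∃ Bε : Set E, B ⊆ Bε ∧ MeasurableSet Bε ∧ IsCompact (closure Bε) ∧
        eLpNorm (B.indicator ψ) 2 μ ≤ ENNReal.ofReal ε * eLpNorm (Bε.indicator ψ) 2 μ)
    (g : ℕ → E → ℝ)
    (hg1 : ∀ n x, g n x ≤ 1)
    (hginf : ∀ B : Set E, IsCompact (closure B) →
      ∃ c : ℝ, 0 < c ∧ ∀ n, ∀ x ∈ E0 ∪ B, c ≤ g n x)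
    (hunif : ∀ B : Set E, IsCompact (closure B) →
      TendstoUniformlyOn (fun n x => g n x) (fun _ => (1 : ℝ)) atTop (E0 ∪ B))
    (W : ℕ → Submodule ℂ (Lp ℂ 2 μ)) [∀ n, (W n).HasOrthogonalProjection]
    (hWmem : ∀ n (φ : Lp ℂ 2 μ), φ ∈ W n ↔
      ∃ ψ ∈ V, (φ : E → ℂ) =ᵐ[μ] fun x => (Real.sqrt (g n x) : ℂ) * ψ x)
    (hWsub : ∀ n, ∀ ψ ∈ V, ∃ φ : Lp ℂ 2 μ,
      (φ : E → ℂ) =ᵐ[μ] fun x => (Real.sqrt (g n x) : ℂ) * ψ x) :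
    ∀ φ : Lp ℂ 2 μ, Tendsto (fun n => projCLM (W n) φ) atTop (𝓝 0) := by
  obtain ⟨K⟩ : Nonempty (CompactExhaustion E) := inferInstance
  have hK : ∀ m, MeasurableSet (K m) ∧ IsCompact (closure (K m)) := fun m =>
    ⟨(K.isCompact m).isClosed.measurableSet, (K.isCompact m).closure⟩
  have hloc : ∀ A, MeasurableSet A → IsCompact (closure A) → ∀ ψ ∈ V,
      MemLp (A.indicator ψ) 2 μ := by
    intro A hA hAc ψ hψ
    obtain ⟨c, hc, hcg⟩ := hginf A hAc
    obtain ⟨φ, hφ⟩ := hWsub 0 ψ hψ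
    exact ((Lp.memLp φ).ae_eq hφ).indicator_of_sqrt_mul (hVmeas ψ hψ).aestronglyMeasurable hA hc
      fun x hx => hcg 0 x (.inr hx)
  intro φ
  refine L2.tendsto_starProjection_zero_of_eLpNorm_indicator_le (fun m => (hK m).1)
    (fun _ _ h => K.subset h) K.iUnion_eq (fun m ε hε => ?_) φ
  obtain ⟨B', -, hB'c, hdom⟩ :=
    exists_forall_eLpNorm_indicator_le_mul V hloc hVL2 (half_pos hε) (hK m).1 (hK m).2
  have hg : ∀ᶠ n in atTop, ∀ x ∈ B', 1 / 4 ≤ g n x :=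
    (Metric.tendstoUniformlyOn_iff.1 (hunif B' hB'c) (3 / 4) (by norm_num)).mono fun n hn x hx => by
      have := hn x (.inr hx)
      rw [Real.dist_eq, abs_lt] at this
      linarith
  filter_upwards [hg] with n hn w hw
  obtain ⟨ψ, hψ, hwψ⟩ := (hWmem n w).1 hw
  rw [eLpNorm_congr_ae hwψ.indicator, eLpNorm_congr_ae hwψ, ← mul_div_cancel₀ ε two_ne_zero]
  exact eLpNorm_indicator_sqrt_mul_le (hg1 n) hn (hdom ψ hψ)

/-- if `V` is a finite-dimensional space of measurable functions with
`V ∩ L2 = 0` in the quantitative sense below, and `W n` is the subspace `sqrt (g n) V`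
of `L2`, then the orthogonal projections onto `W n` tend to `0` strongly. -/
theorem stmt13 {E : Type*} [TopologicalSpace E] [PolishSpace E] [LocallyCompactSpace E]
    [MeasurableSpace E] [BorelSpace E] {μ : Measure E} [SigmaFinite μ]
    (E0 : Set E) (V : Submodule ℂ (E → ℂ)) [FiniteDimensional ℂ V]
    (hVmeas : ∀ ψ ∈ V, Measurable ψ)
    (hVL2 : ∀ ψ ∈ V, ψ ≠ 0 → ∀ ε : ℝ, 0 < ε → ∀ B : Set E, IsCompact (closure B) →
      ∃ Bε : Set E, B ⊆ Bε ∧ MeasurableSet Bε ∧ IsCompact (closure Bε) ∧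
        eLpNorm (B.indicator ψ) 2 μ ≤ ENNReal.ofReal ε * eLpNorm (Bε.indicator ψ) 2 μ)
    (g : ℕ → E → ℝ) (hgm : ∀ n, Measurable (g n))
    (hg0 : ∀ n x, 0 < g n x) (hg1 : ∀ n x, g n x ≤ 1)
    (hginf : ∀ B : Set E, IsCompact (closure B) →
      ∃ c : ℝ, 0 < c ∧ ∀ n, ∀ x ∈ E0 ∪ B, c ≤ g n x)
    (hunif : ∀ B : Set E, IsCompact (closure B) →
      TendstoUniformlyOn (fun n x => g n x) (fun _ => (1 : ℝ)) atTop (E0 ∪ B))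
    (W : ℕ → Submodule ℂ (Lp ℂ 2 μ)) [∀ n, (W n).HasOrthogonalProjection]
    (hWmem : ∀ n (φ : Lp ℂ 2 μ), φ ∈ W n ↔
      ∃ ψ ∈ V, (φ : E → ℂ) =ᵐ[μ] fun x => (Real.sqrt (g n x) : ℂ) * ψ x)
    (hWsub : ∀ n, ∀ ψ ∈ V, ∃ φ : Lp ℂ 2 μ,
      (φ : E → ℂ) =ᵐ[μ] fun x => (Real.sqrt (g n x) : ℂ) * ψ x) :
    ∀ φ : Lp ℂ 2 μ, Tendsto (fun n => projCLM (W n) φ) atTop (𝓝 0) :=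
  stmt13_general E0 V hVmeas hVL2 g hg1 hginf hunif W hWmem hWsub
end
end

section
/- Let E be a locally compact Polish space with Borel measure μ, f a bounded nonnegative continuous function on E, Π an orthogonal projection on L_2(E,μ) with √f Π √f trace class, and g : E → [0,1] measurable with 1 + (g−1)Π invertible. Let Π^g = √g Π (1+(g−1)Π)^{-1} √g. Then √f Π^g √f is trace class. -/
open ContinuousLinearMap Filter MeasureTheory
open scoped NNReal ENNReal Topology

noncomputable section

variable {H : Type*} [NormedAddCommGroup H] [InnerProductSpace ℂ H] [CompleteSpace H]
variable {ι : Type*}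

/-! Since `Π` is an orthogonal projection, `(Π √f)* (Π √f) = √f Π √f`, so `Π √f` is
Hilbert–Schmidt. The multiplication operators `√f`, `√g` are self-adjoint and commute, and
`Π² = Π`; hence, with `R = (1 + (g - 1) Π)⁻¹`,
`√f Π^g √f = (Π √f √g)* (Π R √g √f)`.
Hilbert–Schmidt operators form a two-sided ideal, so the first factor is Hilbert–Schmidt, and so
is the second because `R = 1 - R (g - 1) Π` gives `Π R √g √f = Π √g √f - (Π R (g - 1)) (Π √g √f)`.
-/

open scoped InnerProduct

theorem HilbertBasis.hasSum_norm_inner_sq {𝕜 E : Type*} [RCLike 𝕜] [NormedAddCommGroup E]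
    [InnerProductSpace 𝕜 E] (b : HilbertBasis ι 𝕜 E) (x : E) :
    HasSum (fun i => ‖(inner 𝕜 (b i) x : 𝕜)‖ ^ 2) (‖x‖ ^ 2) := by
  have h := lp.hasSum_norm (p := 2) (by norm_num) (b.repr x)
  simp only [ENNReal.toReal_ofNat, Real.rpow_two, b.repr_apply_apply,
    LinearIsometryEquiv.norm_map] at h
  exact h

namespace IsHS

variable {V : Type*} [NormedAddCommGroup V] [InnerProductSpace ℂ V]
  {e : HilbertBasis ι ℂ V} {S T : V →L[ℂ] V}

theorem comp_left (hT : IsHS e T) (B : V →L[ℂ] V) : IsHS e (B ∘L T) := by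
  refine .of_nonneg_of_le (fun i => by positivity) (fun i => ?_) (hT.mul_left (‖B‖ ^ 2))
  calc ‖B (T (e i))‖ ^ 2 ≤ (‖B‖ * ‖T (e i)‖) ^ 2 := by gcongr; exact B.le_opNorm _
    _ = ‖B‖ ^ 2 * ‖T (e i)‖ ^ 2 := mul_pow _ _ _

theorem sub (hS : IsHS e S) (hT : IsHS e T) : IsHS e (S - T) := by
  refine .of_nonneg_of_le (fun i => by positivity) (fun i => ?_) ((hS.add hT).mul_left 2)
  have h := norm_sub_le (S (e i)) (T (e i))
  calc ‖(S - T) (e i)‖ ^ 2 ≤ (‖S (e i)‖ + ‖T (e i)‖) ^ 2 := by gcongr; exact h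
    _ ≤ 2 * (‖S (e i)‖ ^ 2 + ‖T (e i)‖ ^ 2) := by nlinarith [sq_nonneg (‖S (e i)‖ - ‖T (e i)‖)]

theorem mul_inverse_one_add_mul_mul {P K : V →L[ℂ] V} (hPS : IsHS e (P * S))
    (hU : IsUnit (1 + K * P)) : IsHS e (P * Ring.inverse (1 + K * P) * S) := by
  set R := Ring.inverse (1 + K * P)
  have hexpand : P * R * S = P * S - P * R * K * (P * S) :=
    calc P * R * S = P * (R * (1 + K * P)) * S - P * R * K * (P * S) := by noncomm_ring
      _ = P * S - P * R * K * (P * S) := by rw [Ring.inverse_mul_cancel _ hU, mul_one]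
  rw [hexpand]
  exact hPS.sub (hPS.comp_left _)

variable [CompleteSpace V]

/-- Both sums equal `∑ i j, |⟪e j, T e i⟫|²`, by Parseval. -/
theorem adjoint (hT : IsHS e T) : IsHS e (T†) := by
  have hsum : Summable fun p : ι × ι => ‖(inner ℂ (e p.2) (T (e p.1)) : ℂ)‖ ^ 2 := by
    refine (summable_prod_of_nonneg fun _ => by positivity).2
      ⟨fun i => (e.hasSum_norm_inner_sq (T (e i))).summable, ?_⟩
    simp only [fun i => (e.hasSum_norm_inner_sq (T (e i))).tsum_eq]
    exact hT
  have hswap : Summable fun p : ι × ι => ‖(inner ℂ (e p.2) ((T†) (e p.1)) : ℂ)‖ ^ 2 := by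
    convert (Equiv.prodComm ι ι).summable_iff.2 hsum using 3 with p
    rw [adjoint_inner_right, norm_inner_symm]
    rfl
  rw [summable_prod_of_nonneg fun p => by positivity] at hswap
  simpa only [IsHS, fun j => (e.hasSum_norm_inner_sq ((T†) (e j))).tsum_eq] using hswap.2

theorem comp_right (hT : IsHS e T) (B : V →L[ℂ] V) : IsHS e (T ∘L B) := by
  simpa only [adjoint_comp, adjoint_adjoint] using (hT.adjoint.comp_left (B†)).adjoint

/-- `‖T eᵢ‖² = Re ⟪A eᵢ, B eᵢ⟫ ≤ (‖A eᵢ‖² + ‖B eᵢ‖²) / 2`. -/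
theorem of_isTraceClass_adjoint_comp_self (h : IsTraceClass e (T† ∘L T)) : IsHS e T := by
  obtain ⟨A, B, hA, hB, hAB⟩ := h
  refine .of_nonneg_of_le (fun i => by positivity) (fun i => ?_) ((hA.add hB).mul_left (1 / 2))
  have hinner : (inner ℂ (T (e i)) (T (e i)) : ℂ) = inner ℂ (A (e i)) (B (e i)) := by
    rw [← adjoint_inner_right, ← comp_apply, hAB, comp_apply, adjoint_inner_right]
  have hcs := norm_inner_le_norm (𝕜 := ℂ) (A (e i)) (B (e i))
  calc ‖T (e i)‖ ^ 2 = RCLike.re (inner ℂ (A (e i)) (B (e i)) : ℂ) := by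
        rw [← inner_self_eq_norm_sq (𝕜 := ℂ), hinner]
    _ ≤ ‖A (e i)‖ * ‖B (e i)‖ := (RCLike.re_le_norm _).trans hcs
    _ ≤ 1 / 2 * (‖A (e i)‖ ^ 2 + ‖B (e i)‖ ^ 2) := by
        nlinarith [sq_nonneg (‖A (e i)‖ - ‖B (e i)‖)]

end IsHS

theorem IsStarProjection.star_mul_self {R : Type*} [Semigroup R] [StarMul R] {p : R}
    (hp : IsStarProjection p) (s : R) : star (p * s) * (p * s) = star s * (p * s) := by
  rw [star_mul, hp.isSelfAdjoint.star_eq, mul_assoc, ← mul_assoc p, hp.isIdempotentElem.eq]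

theorem IsStarProjection.isHS_comp_of_isTraceClass {V : Type*} [NormedAddCommGroup V]
    [InnerProductSpace ℂ V] [CompleteSpace V] {e : HilbertBasis ι ℂ V} {P S : V →L[ℂ] V}
    (hP : IsStarProjection P) (h : IsTraceClass e (S† ∘L P ∘L S)) : IsHS e (P ∘L S) := by
  have hPS : (P ∘L S)† ∘L (P ∘L S) = S† ∘L P ∘L S := by
    have h := hP.star_mul_self S
    rw [star_eq_adjoint] at h
    exact h
  exact IsHS.of_isTraceClass_adjoint_comp_self (hPS ▸ h)

section MultiplicationOperator

variable {E : Type*} [MeasurableSpace E] {μ : Measure E}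

theorem isSelfAdjoint_of_ae_eq_mul {c : E → ℝ} {M : Lp ℂ 2 μ →L[ℂ] Lp ℂ 2 μ}
    (hM : ∀ φ : Lp ℂ 2 μ, (M φ : E → ℂ) =ᵐ[μ] fun x => (c x : ℂ) * φ x) : IsSelfAdjoint M := by
  refine ((eq_adjoint_iff M M).2 fun φ ψ => ?_).symm
  rw [L2.inner_def, L2.inner_def]
  refine integral_congr_ae ?_
  filter_upwards [hM φ, hM ψ] with x hφ hψ
  simp only [hφ, hψ, RCLike.inner_apply, map_mul, Complex.conj_ofReal]
  ring

theorem commute_of_ae_eq_mul {c d : E → ℂ} {M N : Lp ℂ 2 μ →L[ℂ] Lp ℂ 2 μ}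
    (hM : ∀ φ : Lp ℂ 2 μ, (M φ : E → ℂ) =ᵐ[μ] fun x => c x * φ x)
    (hN : ∀ φ : Lp ℂ 2 μ, (N φ : E → ℂ) =ᵐ[μ] fun x => d x * φ x) : Commute M N := by
  ext φ
  filter_upwards [hM (N φ), hN φ, hN (M φ), hM φ] with x hMN hN' hNM hM'
  rw [mul_apply_eq_comp, mul_apply_eq_comp, hMN, hNM, hN', hM', mul_left_comm]

end MultiplicationOperator

theorem stmt17_general {E : Type*} [MeasurableSpace E] {μ : Measure E}
    (e : HilbertBasis ι ℂ (Lp ℂ 2 μ))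
    (f : E → ℝ)
    (Mf : Lp ℂ 2 μ →L[ℂ] Lp ℂ 2 μ)
    (hMf : ∀ φ : Lp ℂ 2 μ, (Mf φ : E → ℂ) =ᵐ[μ] fun x => (Real.sqrt (f x) : ℂ) * φ x)
    (P : Lp ℂ 2 μ →L[ℂ] Lp ℂ 2 μ) (hproj : P ∘L P = P) (hsa : IsSelfAdjoint P)
    (g : E → ℝ)
    (Mg : Lp ℂ 2 μ →L[ℂ] Lp ℂ 2 μ)
    (hMg : ∀ φ : Lp ℂ 2 μ, (Mg φ : E → ℂ) =ᵐ[μ] fun x => (Real.sqrt (g x) : ℂ) * φ x)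
    (htc : IsTraceClass e (Mf ∘L P ∘L Mf))
    (hU : IsUnit (1 + (Mg ∘L Mg - 1) ∘L P))
    (Pg : Lp ℂ 2 μ →L[ℂ] Lp ℂ 2 μ)
    (hPg : Pg = Mg ∘L P ∘L Ring.inverse (1 + (Mg ∘L Mg - 1) ∘L P) ∘L Mg) :
    IsTraceClass e (Mf ∘L Pg ∘L Mf) := by
  have hP : IsStarProjection P := ⟨hproj, hsa⟩
  have hMf_sa := isSelfAdjoint_of_ae_eq_mul hMf
  have hMg_sa := isSelfAdjoint_of_ae_eq_mul hMg
  have hcomm : Mf * Mg = Mg * Mf := (commute_of_ae_eq_mul hMf hMg).eq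
  have hPf : IsHS e (P * Mf) :=
    hP.isHS_comp_of_isTraceClass (by rwa [← star_eq_adjoint, hMf_sa])
  have hPfg : IsHS e (P * (Mf * Mg)) := by rw [← mul_assoc]; exact hPf.comp_right Mg
  set R := Ring.inverse (1 + (Mg * Mg - 1) * P)
  have hPRgf : IsHS e (P * R * (Mg * Mf)) := IsHS.mul_inverse_one_add_mul_mul (hcomm ▸ hPfg) hU
  have hfactor : Mf ∘L Pg ∘L Mf = star (P * (Mf * Mg)) * (P * R * (Mg * Mf)) :=
    calc Mf ∘L Pg ∘L Mf = Mf * Mg * P * R * (Mg * Mf) := by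
          simp only [hPg, ← mul_def, mul_assoc]
          rfl
      _ = Mg * Mf * (P * P) * R * (Mg * Mf) := by rw [hP.isIdempotentElem.eq, hcomm]
      _ = star (P * (Mf * Mg)) * (P * R * (Mg * Mf)) := by
          simp only [star_mul, hsa.star_eq, hMf_sa.star_eq, hMg_sa.star_eq, mul_assoc]
  rw [hfactor, star_eq_adjoint]
  exact ⟨_, _, hPfg, hPRgf, rfl⟩

/-- if `sqrt f P sqrt f` is trace class and `1 + (g-1) P` is invertible,
then `sqrt f P^g sqrt f` is trace class, where `P^g = sqrt g P (1 + (g-1) P)⁻¹ sqrt g`.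
Here `Mf` is multiplication by `sqrt f` and `Mg` by `sqrt g`. -/
theorem stmt17 {E : Type*} [TopologicalSpace E] [PolishSpace E] [LocallyCompactSpace E]
    [MeasurableSpace E] [BorelSpace E] {μ : Measure E} [SigmaFinite μ]
    (e : HilbertBasis ι ℂ (Lp ℂ 2 μ))
    (f : E → ℝ) (hfc : Continuous f) (hf0 : ∀ x, 0 ≤ f x) (hfb : ∃ C : ℝ, ∀ x, f x ≤ C)
    (Mf : Lp ℂ 2 μ →L[ℂ] Lp ℂ 2 μ)
    (hMf : ∀ φ : Lp ℂ 2 μ, (Mf φ : E → ℂ) =ᵐ[μ] fun x => (Real.sqrt (f x) : ℂ) * φ x)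
    (P : Lp ℂ 2 μ →L[ℂ] Lp ℂ 2 μ) (hproj : P ∘L P = P) (hsa : IsSelfAdjoint P)
    (g : E → ℝ) (hgm : Measurable g) (hg0 : ∀ x, 0 ≤ g x) (hg1 : ∀ x, g x ≤ 1)
    (Mg : Lp ℂ 2 μ →L[ℂ] Lp ℂ 2 μ)
    (hMg : ∀ φ : Lp ℂ 2 μ, (Mg φ : E → ℂ) =ᵐ[μ] fun x => (Real.sqrt (g x) : ℂ) * φ x)
    (htc : IsTraceClass e (Mf ∘L P ∘L Mf))
    (hU : IsUnit (1 + (Mg ∘L Mg - 1) ∘L P))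
    (Pg : Lp ℂ 2 μ →L[ℂ] Lp ℂ 2 μ)
    (hPg : Pg = Mg ∘L P ∘L Ring.inverse (1 + (Mg ∘L Mg - 1) ∘L P) ∘L Mg) :
    IsTraceClass e (Mf ∘L Pg ∘L Mf) :=
  stmt17_general e f Mf hMf P hproj hsa g Mg hMg htc hU Pg hPg
end
end
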